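/- Suppose T is unbounded from above and from below (i.e., a_1 = −∞ and b_K = ∞). Then for every α ∈ (0,1) and every w ∈ T, (U(w) − L(w))/ς ≤ 2·Φ^{−1}(1 − p_* α/2). -/

import Mathlib

/-!
Since `T` contains a left and a right half-line, `P(N(ϑ, ς²) ∈ T)` is bounded below uniformly in
`ϑ`, so `p_* > 0`. Truncation can only shrink a tail by the factor `P(N(θ, ς²) ∈ T) ≥ p_*`: from
`F^T_{U(w)}(w) = α/2` we get `Φ((w - U(w))/ς) ≥ p_* α/2`, i.e. `(U(w) - w)/ς ≤ Φ⁻¹(1 - p_* α/2)`,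
and the upper tail at `L(w)` gives `(w - L(w))/ς ≤ Φ⁻¹(1 - p_* α/2)` in the same way.
Adding the two bounds proves the claim.
-/

open Filter MeasureTheory ProbabilityTheory Set

/-- The cdf of the normal distribution with mean `θ` and variance `ς²`, truncated to the
set `T`: `F^T_{θ,ς²}(w) = P(V ≤ w ∧ V ∈ T) / P(V ∈ T)` for `V ~ N(θ, ς²)`. -/
noncomputable def truncNormalCDF (ς : ℝ) (T : Set ℝ) (θ w : ℝ) : ℝ :=
  ((gaussianReal θ (Real.toNNReal (ς ^ 2))) (Set.Iic w ∩ T)).toReal /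
    ((gaussianReal θ (Real.toNNReal (ς ^ 2))) T).toReal

/-- The standard normal cumulative distribution function. -/
noncomputable def stdNormalCDF (x : ℝ) : ℝ :=
  ∫ t in Set.Iic x, (Real.sqrt (2 * Real.pi))⁻¹ * Real.exp (-(t ^ 2) / 2)

/-- The inverse `Φ^{−1}` of the standard normal cdf on `(0,1)`. -/
noncomputable def stdNormalCDFInv (p : ℝ) : ℝ :=
  Function.invFun stdNormalCDF p

lemma stdNormalCDF_eq_setIntegral (x : ℝ) :
    stdNormalCDF x = ∫ t in Iic x, gaussianPDFReal 0 1 t := by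
  simp [stdNormalCDF, gaussianPDFReal]

lemma stdNormalCDF_eq_cdf : stdNormalCDF = cdf (gaussianReal 0 1) := by
  ext x
  rw [cdf_eq_real, measureReal_def, gaussianReal_apply_eq_integral 0 one_ne_zero,
    ENNReal.toReal_ofReal
      (setIntegral_nonneg measurableSet_Iic fun t _ => gaussianPDFReal_nonneg 0 1 t),
    stdNormalCDF_eq_setIntegral]

lemma stdNormalCDF_strictMono : StrictMono stdNormalCDF := by
  intro x y hxy
  have hIoc : (gaussianReal 0 1) (Ioc x y) ≠ 0 := fun h =>
    (not_le.mpr hxy) (by simpa using gaussianReal_absolutelyContinuous' 0 one_ne_zero h)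
  have hsplit : stdNormalCDF y = stdNormalCDF x + (gaussianReal 0 1).real (Ioc x y) := by
    rw [stdNormalCDF_eq_cdf, cdf_eq_real, cdf_eq_real, ← measureReal_union
      (Iic_disjoint_Ioc le_rfl) measurableSet_Ioc, Iic_union_Ioc_eq_Iic hxy.le]
  rw [hsplit]
  exact lt_add_of_pos_right _ (ENNReal.toReal_pos hIoc (measure_ne_top _ _))

lemma stdNormalCDF_continuous : Continuous stdNormalCDF := by
  have hint := integrable_gaussianPDFReal 0 1
  have hprim (x : ℝ) :
      stdNormalCDF x = stdNormalCDF 0 + ∫ t in (0 : ℝ)..x, gaussianPDFReal 0 1 t := by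
    rw [stdNormalCDF_eq_setIntegral, stdNormalCDF_eq_setIntegral,
      ← intervalIntegral.integral_Iic_sub_Iic hint.integrableOn hint.integrableOn]
    ring
  rw [funext hprim]
  exact continuous_const.add
    (intervalIntegral.continuous_primitive (fun _ _ => hint.intervalIntegrable) 0)

lemma stdNormalCDF_neg (x : ℝ) : stdNormalCDF (-x) = 1 - stdNormalCDF x := by
  have : NullSingletonClass (gaussianReal 0 1) :=
    ⟨fun _ => gaussianReal_absolutelyContinuous 0 one_ne_zero Real.volume_singleton⟩
  have hneg : (gaussianReal 0 1).map (fun t => -t) = gaussianReal 0 1 := by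
    simpa using gaussianReal_map_neg (μ := 0) (v := 1)
  rw [stdNormalCDF_eq_cdf, cdf_eq_real, cdf_eq_real, ← hneg,
    map_measureReal_apply (by fun_prop) measurableSet_Iic, hneg,
    show (fun t : ℝ => -t) ⁻¹' Iic (-x) = Ici x by ext; simp,
    ← measureReal_congr Ioi_ae_eq_Ici, ← compl_Iic, measureReal_compl measurableSet_Iic,
    probReal_univ]

lemma stdNormalCDF_pos (x : ℝ) : 0 < stdNormalCDF x := by
  have hIic : (gaussianReal 0 1) (Iic x) ≠ 0 := fun h => by
    simpa using gaussianReal_absolutelyContinuous' 0 one_ne_zero h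
  rw [stdNormalCDF_eq_cdf, cdf_eq_real]
  exact ENNReal.toReal_pos hIic (measure_ne_top _ _)

lemma stdNormalCDF_stdNormalCDFInv {p : ℝ} (hp : p ∈ Ioo 0 1) :
    stdNormalCDF (stdNormalCDFInv p) = p := by
  have hbot : ∀ᶠ x in atBot, stdNormalCDF x < p := by
    rw [stdNormalCDF_eq_cdf]; exact (tendsto_cdf_atBot _).eventually (eventually_lt_nhds hp.1)
  have htop : ∀ᶠ x in atTop, p < stdNormalCDF x := by
    rw [stdNormalCDF_eq_cdf]; exact (tendsto_cdf_atTop _).eventually (eventually_gt_nhds hp.2)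
  obtain ⟨x, hx⟩ := hbot.exists
  obtain ⟨y, hy⟩ := (htop.and (eventually_ge_atTop x)).exists
  obtain ⟨c, -, hc⟩ := intermediate_value_Icc hy.2 stdNormalCDF_continuous.continuousOn
    ⟨hx.le, hy.1.le⟩
  exact Function.invFun_eq ⟨c, hc⟩

lemma le_stdNormalCDFInv_iff {p : ℝ} (hp : p ∈ Ioo 0 1) {x : ℝ} :
    x ≤ stdNormalCDFInv p ↔ stdNormalCDF x ≤ p := by
  conv_rhs => rw [← stdNormalCDF_stdNormalCDFInv hp]
  exact stdNormalCDF_strictMono.le_iff_le.symm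

lemma gaussianReal_real_Iic {ς : ℝ} (hς : 0 < ς) (θ x : ℝ) :
    (gaussianReal θ (ς ^ 2).toNNReal).real (Iic x) = stdNormalCDF ((x - θ) / ς) := by
  have hstd : gaussianReal θ (ς ^ 2).toNNReal =
      ((gaussianReal 0 1).map (ς * ·)).map (· + θ) := by
    rw [gaussianReal_map_const_mul, gaussianReal_map_add_const]
    congr 1
    · ring
    · ext
      simp [Real.coe_toNNReal _ (sq_nonneg ς)]
  rw [hstd, map_measureReal_apply (by fun_prop) measurableSet_Iic,
    map_measureReal_apply (by fun_prop) (measurableSet_Iic.preimage (by fun_prop)),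
    stdNormalCDF_eq_cdf, cdf_eq_real]
  congr 1
  ext y
  simp [le_div_iff₀ hς, mul_comm, le_sub_iff_add_le]

lemma gaussianReal_real_Ioi {ς : ℝ} (hς : 0 < ς) (θ x : ℝ) :
    (gaussianReal θ (ς ^ 2).toNNReal).real (Ioi x) = 1 - stdNormalCDF ((x - θ) / ς) := by
  rw [← compl_Iic, measureReal_compl measurableSet_Iic, probReal_univ,
    gaussianReal_real_Iic hς]

lemma exists_pos_forall_le_gaussianReal_real {ς : ℝ} (hς : 0 < ς) {T : Set ℝ} {c d : ℝ}
    (hT : Iic c ∪ Ioi d ⊆ T) :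
    ∃ m, 0 < m ∧ ∀ θ : ℝ, m ≤ (gaussianReal θ (ς ^ 2).toNNReal).real T := by
  refine ⟨stdNormalCDF ((c - d) / (2 * ς)), stdNormalCDF_pos _, fun θ => ?_⟩
  rcases le_or_gt θ ((c + d) / 2) with hθ | hθ
  · calc stdNormalCDF ((c - d) / (2 * ς)) ≤ stdNormalCDF ((c - θ) / ς) := by
          refine stdNormalCDF_strictMono.monotone ?_
          rw [div_le_div_iff₀ (by positivity) hς]
          nlinarith
      _ = (gaussianReal θ (ς ^ 2).toNNReal).real (Iic c) := (gaussianReal_real_Iic hς θ c).symm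
      _ ≤ _ := measureReal_mono (subset_union_left.trans hT)
  · calc stdNormalCDF ((c - d) / (2 * ς)) ≤ 1 - stdNormalCDF ((d - θ) / ς) := by
          rw [← stdNormalCDF_neg, ← neg_div]
          refine stdNormalCDF_strictMono.monotone ?_
          rw [div_le_div_iff₀ (by positivity) hς]
          nlinarith
      _ = (gaussianReal θ (ς ^ 2).toNNReal).real (Ioi d) := (gaussianReal_real_Ioi hς θ d).symm
      _ ≤ _ := measureReal_mono (subset_union_right.trans hT)

lemma exists_Iic_union_Ioi_subset {K : ℕ} (hK : 1 ≤ K) {a b : ℕ → EReal}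
    (hab : ∀ i < K, a i < b i) (ha : a 0 = ⊥) (hb : b (K - 1) = ⊤) :
    ∃ c d : ℝ, Iic c ∪ Ioi d ⊆
      ⋃ i ∈ Finset.range K, {x : ℝ | a i < (x : EReal) ∧ (x : EReal) < b i} := by
  obtain ⟨c, -, hc⟩ := EReal.lt_iff_exists_real_btwn.mp (hab 0 (by omega))
  obtain ⟨d, hd, -⟩ := EReal.lt_iff_exists_real_btwn.mp (hab (K - 1) (by omega))
  refine ⟨c, d, union_subset (fun x hx => ?_) (fun x hx => ?_)⟩
  · refine mem_iUnion₂.mpr ⟨0, Finset.mem_range.mpr (by omega), ?_, ?_⟩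
    · exact ha ▸ EReal.bot_lt_coe x
    · exact (EReal.coe_le_coe_iff.mpr hx).trans_lt hc
  · refine mem_iUnion₂.mpr ⟨K - 1, Finset.mem_range.mpr (by omega), ?_, ?_⟩
    · exact hd.trans (EReal.coe_lt_coe_iff.mpr hx)
    · exact hb ▸ EReal.coe_lt_top x

section MeasureReal

variable {Ω : Type*} [MeasurableSpace Ω] {μ : Measure Ω} {s t : Set Ω}

lemma mul_le_measureReal_of_measureReal_inter_div_eq [IsFiniteMeasure μ] {β p : ℝ}
    (hβ : 0 ≤ β) (hp : p ≤ μ.real t) (h : μ.real (s ∩ t) / μ.real t = β) :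
    β * p ≤ μ.real s := by
  rcases eq_or_ne (μ.real t) 0 with ht | ht
  · rw [ht, div_zero] at h
    simp [← h]
  calc β * p ≤ β * μ.real t := mul_le_mul_of_nonneg_left hp hβ
    _ = μ.real (s ∩ t) := by rw [← h, div_mul_cancel₀ _ ht]
    _ ≤ μ.real s := measureReal_mono inter_subset_left

lemma measureReal_compl_inter_div [IsFiniteMeasure μ] (hs : MeasurableSet s)
    (ht : μ.real t ≠ 0) :
    μ.real (sᶜ ∩ t) / μ.real t = 1 - μ.real (s ∩ t) / μ.real t := by
  have hsplit := measureReal_inter_add_sdiff (μ := μ) (s := t) hs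
  rw [sdiff_eq, inter_comm t s, inter_comm t sᶜ] at hsplit
  field_simp
  linarith

end MeasureReal

lemma one_sub_mem_Ioo {p β : ℝ} (hp : 0 < p) (hβ : 0 < β) (hpβ : p * β < 1) :
    1 - p * β ∈ Ioo 0 1 :=
  ⟨by linarith, by linarith [mul_pos hp hβ]⟩

section Truncated

variable {ς : ℝ} {T : Set ℝ} {p β θ w : ℝ}

lemma truncNormalCDF_eq_measureReal_div :
    truncNormalCDF ς T θ w = (gaussianReal θ (ς ^ 2).toNNReal).real (Iic w ∩ T) /
      (gaussianReal θ (ς ^ 2).toNNReal).real T := rfl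

lemma sub_div_le_stdNormalCDFInv_of_truncNormalCDF_eq
    (hς : 0 < ς) (hp : 0 < p) (hβ : 0 < β) (hpβ : p * β < 1)
    (hT : p ≤ (gaussianReal θ (ς ^ 2).toNNReal).real T)
    (h : truncNormalCDF ς T θ w = β) :
    (θ - w) / ς ≤ stdNormalCDFInv (1 - p * β) := by
  have htail := mul_le_measureReal_of_measureReal_inter_div_eq hβ.le hT h
  rw [gaussianReal_real_Iic hς, ← neg_sub, neg_div, stdNormalCDF_neg] at htail
  rw [le_stdNormalCDFInv_iff (one_sub_mem_Ioo hp hβ hpβ)]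
  linarith

lemma sub_div_le_stdNormalCDFInv_of_truncNormalCDF_eq_one_sub
    (hς : 0 < ς) (hp : 0 < p) (hβ : 0 < β) (hpβ : p * β < 1)
    (hT : p ≤ (gaussianReal θ (ς ^ 2).toNNReal).real T)
    (h : truncNormalCDF ς T θ w = 1 - β) :
    (w - θ) / ς ≤ stdNormalCDFInv (1 - p * β) := by
  have hIoi : (gaussianReal θ (ς ^ 2).toNNReal).real (Ioi w ∩ T) /
      (gaussianReal θ (ς ^ 2).toNNReal).real T = β := by
    rw [← compl_Iic, measureReal_compl_inter_div measurableSet_Iic (hp.trans_le hT).ne',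
      ← truncNormalCDF_eq_measureReal_div, h, sub_sub_cancel]
  have htail := mul_le_measureReal_of_measureReal_inter_div_eq hβ.le hT hIoi
  rw [gaussianReal_real_Ioi hς] at htail
  rw [le_stdNormalCDFInv_iff (one_sub_mem_Ioo hp hβ hpβ)]
  linarith

end Truncated

theorem stmt_12_general
    (ς : ℝ) (hς : 0 < ς) (K : ℕ) (hK : 1 ≤ K) (a b : ℕ → EReal)
    (hab : ∀ i < K, a i < b i)
    (T : Set ℝ)
    (hT : T = ⋃ i ∈ Finset.range K, {x : ℝ | a i < (x : EReal) ∧ (x : EReal) < b i})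
    (ha1 : a 0 = ⊥) (hbK : b (K - 1) = ⊤)
    (pstar : ℝ)
    (hp : pstar = ⨅ ϑ : ℝ, ((gaussianReal ϑ (Real.toNNReal (ς ^ 2))) T).toReal)
    (α : ℝ) (hα : α ∈ Set.Ioo (0 : ℝ) 1) (L U : ℝ → ℝ)
    (hL : ∀ w ∈ T, truncNormalCDF ς T (L w) w = 1 - α / 2)
    (hU : ∀ w ∈ T, truncNormalCDF ς T (U w) w = α / 2)
    (w : ℝ) (hw : w ∈ T) :
    (U w - L w) / ς ≤ 2 * stdNormalCDFInv (1 - pstar * (α / 2)) := by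
  obtain ⟨c, d, hcd⟩ := exists_Iic_union_Ioi_subset hK hab ha1 hbK
  obtain ⟨m, hm, hmT⟩ := exists_pos_forall_le_gaussianReal_real hς (hT ▸ hcd)
  have hbdd : BddBelow (range fun ϑ : ℝ => (gaussianReal ϑ (ς ^ 2).toNNReal).real T) :=
    ⟨0, by rintro _ ⟨ϑ, rfl⟩; exact measureReal_nonneg⟩
  have hpT (θ : ℝ) : pstar ≤ (gaussianReal θ (ς ^ 2).toNNReal).real T :=
    hp ▸ ciInf_le hbdd θ
  have hpos : 0 < pstar := hm.trans_le (hp ▸ le_ciInf hmT)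
  have hβ : 0 < α / 2 := half_pos hα.1
  have hpβ : pstar * (α / 2) < 1 :=
    mul_lt_one_of_nonneg_of_lt_one_right ((hpT 0).trans measureReal_le_one) hβ.le
      (by linarith [hα.2])
  calc (U w - L w) / ς = (U w - w) / ς + (w - L w) / ς := by ring
    _ ≤ 2 * stdNormalCDFInv (1 - pstar * (α / 2)) := by
      linarith [sub_div_le_stdNormalCDFInv_of_truncNormalCDF_eq hς hpos hβ hpβ (hpT _) (hU w hw),
        sub_div_le_stdNormalCDFInv_of_truncNormalCDF_eq_one_sub hς hpos hβ hpβ (hpT _) (hL w hw)]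

/-- Suppose `T` is unbounded from above and from below (`a_1 = −∞` and `b_K = ∞`).
Then for every `α ∈ (0,1)` and every `w ∈ T`,
`(U(w) − L(w))/ς ≤ 2·Φ^{−1}(1 − p_* α/2)`, where `L(w) = Q_{1−α/2}(w)`,
`U(w) = Q_{α/2}(w)` and `p_* = inf_{ϑ} P(N(ϑ,ς²) ∈ T)`. -/
theorem stmt_12
    (ς : ℝ) (hς : 0 < ς) (K : ℕ) (hK : 1 ≤ K) (a b : ℕ → EReal)
    (hab : ∀ i < K, a i < b i) (hba : ∀ i, i + 1 < K → b i < a (i + 1))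
    (T : Set ℝ)
    (hT : T = ⋃ i ∈ Finset.range K, {x : ℝ | a i < (x : EReal) ∧ (x : EReal) < b i})
    (ha1 : a 0 = ⊥) (hbK : b (K - 1) = ⊤)
    (pstar : ℝ)
    (hp : pstar = ⨅ ϑ : ℝ, ((gaussianReal ϑ (Real.toNNReal (ς ^ 2))) T).toReal)
    (α : ℝ) (hα : α ∈ Set.Ioo (0 : ℝ) 1) (L U : ℝ → ℝ)
    (hL : ∀ w ∈ T, truncNormalCDF ς T (L w) w = 1 - α / 2)
    (hU : ∀ w ∈ T, truncNormalCDF ς T (U w) w = α / 2)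
    (w : ℝ) (hw : w ∈ T) :
    (U w - L w) / ς ≤ 2 * stdNormalCDFInv (1 - pstar * (α / 2)) :=
  stmt_12_general ς hς K hK a b hab T hT ha1 hbK pstar hp α hα L U hL hU w hw
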